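/- Let P : Cᵒᵖ → BoolAlg be a Boolean doctrine over a category C with finite products, let R : Dᵒᵖ → BoolAlg be a first-order Boolean doctrine, and let (M, 𝔪) : P → R be a Boolean doctrine morphism. Let ī, j̄ ∈ ℕ, let S, Y₁, …, Y_ī, Z₁, …, Z_j̄ ∈ C, let αᵢ ∈ P(S×Yᵢ) (i = 1, …, ī) and βⱼ ∈ P(S×Zⱼ) (j = 1, …, j̄). Suppose there are n ∈ ℕ, indices l₁, …, l_n ∈ {1, …, ī} and morphisms gᵢ : S × ∏_{j=1}^{j̄} Zⱼ → Y_{lᵢ} (i = 1, …, n) such that, in P(S × ∏_{j=1}^{j̄} Zⱼ), ⋀_{i=1}^{n} P(⟨pr₁, gᵢ⟩)(α_{lᵢ}) ≤ ⋁_{j=1}^{j̄} P(⟨pr₁, pr_{j+1}⟩)(βⱼ). Then, in R(M(S)), ⋀_{i=1}^{ī} ∀_{M(S)}^{M(Yᵢ)}(𝔪_{S×Yᵢ}(αᵢ)) ≤ ⋁_{j=1}^{j̄} ∀_{M(S)}^{M(Zⱼ)}(𝔪_{S×Zⱼ}(βⱼ)), where the values 𝔪_{S×Y}(−) ∈ R(M(S×Y))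 are transported along the canonical isomorphism M(S×Y) ≅ M(S)×M(Y). -/

import Mathlib

open CategoryTheory CategoryTheory.Limits Opposite

universe w v u v₁ u₁ v₂ u₂ v₃ u₃

namespace BooleanDoctrine

/-- Elements of a Boolean algebra in the category `BoolAlg` can be acted on by morphisms. -/
instance (X Y : BoolAlg) : FunLike (X ⟶ Y) X Y where
  coe f := ⇑f.hom
  coe_injective _ _ h := BoolAlg.hom_ext (DFunLike.coe_injective h)

/-- A filter of a Boolean algebra: contains `⊤`, closed under binary meets, upward closed. -/
def IsBAFilter {A : Type*} [BooleanAlgebra A] (F : Set A) : Prop :=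
  (⊤ : A) ∈ F ∧ (∀ a b : A, a ∈ F → b ∈ F → a ⊓ b ∈ F) ∧ ∀ a b : A, a ∈ F → a ≤ b → b ∈ F

/-- The fiber of a Boolean doctrine at an object of the base category. -/
abbrev fiber {C : Type u₁} [Category.{v₁} C] (P : Cᵒᵖ ⥤ BoolAlg.{w}) (X : C) : Type w :=
  P.obj (op X)

/-- A universal filter for a Boolean doctrine `P : Cᵒᵖ ⥤ BoolAlg`. -/
def IsUniversalFilter {C : Type u₁} [Category.{v₁} C] [HasFiniteProducts C]
    (P : Cᵒᵖ ⥤ BoolAlg.{w}) (F : ∀ X : C, Set (P.obj (op X))) : Prop :=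
  (∀ (X Y : C) (f : X ⟶ Y) (α : P.obj (op Y)), α ∈ F Y → P.map f.op α ∈ F X) ∧
    ∀ X : C, IsBAFilter (F X)

/-- A universal ideal for a Boolean doctrine `P : Cᵒᵖ ⥤ BoolAlg`. -/
def IsUniversalIdeal {C : Type u₁} [Category.{v₁} C] [HasFiniteProducts C]
    (P : Cᵒᵖ ⥤ BoolAlg.{w}) (I : ∀ X : C, Set (P.obj (op X))) : Prop :=
  (∀ (X Y : C) (m : ℕ) (f : Fin m → (X ⟶ Y)) (α : P.obj (op Y)),
      (Finset.univ.inf fun j => P.map (f j).op α) ∈ I X → α ∈ I Y) ∧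
    (∀ (X : C) (a b : P.obj (op X)), a ≤ b → b ∈ I X → a ∈ I X) ∧
    (∀ (X₁ X₂ : C) (α₁ : P.obj (op X₁)) (α₂ : P.obj (op X₂)), α₁ ∈ I X₁ → α₂ ∈ I X₂ →
      P.map (prod.fst : X₁ ⨯ X₂ ⟶ X₁).op α₁ ⊔ P.map (prod.snd : X₁ ⨯ X₂ ⟶ X₂).op α₂ ∈
        I (X₁ ⨯ X₂)) ∧
    (⊥ : P.obj (op (⊤_ C))) ∈ I (⊤_ C)

/-- A universal ultrafilter for a Boolean doctrine `P : Cᵒᵖ ⥤ BoolAlg`. -/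
def IsUniversalUltrafilter {C : Type u₁} [Category.{v₁} C] [HasFiniteProducts C]
    (P : Cᵒᵖ ⥤ BoolAlg.{w}) (F : ∀ X : C, Set (P.obj (op X))) : Prop :=
  (∀ (X Y : C) (f : X ⟶ Y) (α : P.obj (op Y)), α ∈ F Y → P.map f.op α ∈ F X) ∧
    (∀ X : C, IsBAFilter (F X)) ∧
    (∀ (X₁ X₂ : C) (α₁ : P.obj (op X₁)) (α₂ : P.obj (op X₂)),
      P.map (prod.fst : X₁ ⨯ X₂ ⟶ X₁).op α₁ ⊔ P.map (prod.snd : X₁ ⨯ X₂ ⟶ X₂).op α₂ ∈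
          F (X₁ ⨯ X₂) →
        α₁ ∈ F X₁ ∨ α₂ ∈ F X₂) ∧
    (⊥ : P.obj (op (⊤_ C))) ∉ F (⊤_ C)

/-- Richness of a Boolean doctrine with respect to a family of subsets of the fibers. -/
def IsRich {C : Type u₁} [Category.{v₁} C] [HasFiniteProducts C]
    (P : Cᵒᵖ ⥤ BoolAlg.{w}) (F : ∀ X : C, Set (P.obj (op X))) : Prop :=
  ∀ (X : C) (α : P.obj (op X)), α ∉ F X → ∃ c : (⊤_ C) ⟶ X, P.map c.op α ∉ F (⊤_ C)

/-- The failure of the "universal closure" of `a` witnessed by a constant `c : ⊤ ⟶ X`. -/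
def IsRichAt {C : Type u₁} [Category.{v₁} C] [HasFiniteProducts C]
    (P : Cᵒᵖ ⥤ BoolAlg.{w}) (F : ∀ X : C, Set (P.obj (op X)))
    (X : C) (a : P.obj (op X)) : Prop :=
  ∃ c : (⊤_ C) ⟶ X, P.map c.op a ∉ F (⊤_ C)

/-- The universal filter generated by a family of subsets of the fibers: the intersection of
all universal filters containing the family componentwise. -/
def genUnivFilter {C : Type u₁} [Category.{v₁} C] [HasFiniteProducts C]
    (P : Cᵒᵖ ⥤ BoolAlg.{w}) (A : ∀ X : C, Set (P.obj (op X))) :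
    ∀ X : C, Set (P.obj (op X)) := fun X =>
  {φ | ∀ G : ∀ X' : C, Set (P.obj (op X')),
    IsUniversalFilter P G → (∀ X', A X' ⊆ G X') → φ ∈ G X}

/-- The universal ideal generated by a family of subsets of the fibers: the intersection of
all universal ideals containing the family componentwise. -/
def genUnivIdeal {C : Type u₁} [Category.{v₁} C] [HasFiniteProducts C]
    (P : Cᵒᵖ ⥤ BoolAlg.{w}) (A : ∀ X : C, Set (P.obj (op X))) :
    ∀ X : C, Set (P.obj (op X)) := fun X =>
  {φ | ∀ J : ∀ X' : C, Set (P.obj (op X')),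
    IsUniversalIdeal P J → (∀ X', A X' ⊆ J X') → φ ∈ J X}

/-- The family of subsets of the fibers placing the element `α i` in the component `Y i`. -/
def familyOfPoints {C : Type u₁} [Category.{v₁} C] (P : Cᵒᵖ ⥤ BoolAlg.{w}) {ι : Type u₃}
    (Y : ι → C) (α : ∀ i, P.obj (op (Y i))) : ∀ X : C, Set (P.obj (op X)) := fun X =>
  {a | ∃ (i : ι) (h : Y i = X), a = P.map (eqToHom h.symm).op (α i)}

/-- The subsets doctrine, sending a set to its powerset Boolean algebra and a function to
its preimage map. -/
def subsetsDoctrine : (Type v)ᵒᵖ ⥤ BoolAlg.{v} where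
  obj X := BoolAlg.of (Set X.unop)
  map f := BoolAlg.ofHom
    { toFun := fun S => f.unop ⁻¹' S
      map_sup' := fun _ _ => rfl
      map_inf' := fun _ _ => rfl
      map_top' := rfl
      map_bot' := rfl }
  map_id _ := rfl
  map_comp _ _ := rfl

/-- A Boolean doctrine morphism: a finite-product-preserving functor together with a
natural transformation. -/
structure DoctrineHom {C : Type u₁} [Category.{v₁} C] {D : Type u₂} [Category.{v₂} D]
    (P : Cᵒᵖ ⥤ BoolAlg.{w}) (R : Dᵒᵖ ⥤ BoolAlg.{w}) where
  functor : C ⥤ D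
  preserves : PreservesFiniteProducts functor
  trans : P ⟶ functor.op ⋙ R

/-- Composition of Boolean doctrine morphisms. -/
def DoctrineHom.comp {C : Type u₁} [Category.{v₁} C] {D : Type u₂} [Category.{v₂} D]
    {E : Type u₃} [Category.{v₃} E]
    {P : Cᵒᵖ ⥤ BoolAlg.{w}} {R : Dᵒᵖ ⥤ BoolAlg.{w}} {S : Eᵒᵖ ⥤ BoolAlg.{w}}
    (Φ : DoctrineHom P R) (Ψ : DoctrineHom R S) : DoctrineHom P S where
  functor := Φ.functor ⋙ Ψ.functor
  preserves := by
    have := Φ.preserves; have := Ψ.preserves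
    infer_instance
  trans := Φ.trans ≫ Functor.whiskerLeft Φ.functor.op Ψ.trans

/-- A first-order structure on a Boolean doctrine: fiberwise right adjoints to reindexing
along first projections, satisfying the Beck–Chevalley condition. -/
structure FOStructure {C : Type u₁} [Category.{v₁} C] [HasFiniteProducts C]
    (P : Cᵒᵖ ⥤ BoolAlg.{w}) where
  fa : ∀ X Y : C, P.obj (op (X ⨯ Y)) → P.obj (op X)
  adj : ∀ (X Y : C) (α : P.obj (op X)) (β : P.obj (op (X ⨯ Y))),
      α ≤ fa X Y β ↔ P.map (prod.fst : X ⨯ Y ⟶ X).op α ≤ β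
  bc : ∀ (X X' Y : C) (f : X' ⟶ X) (β : P.obj (op (X ⨯ Y))),
      P.map f.op (fa X Y β) = fa X' Y (P.map (prod.map f (𝟙 Y)).op β)

/-- The existential quantifier `∃ = ¬∀¬` associated to a first-order structure. -/
noncomputable def FOStructure.ex {C : Type u₁} [Category.{v₁} C] [HasFiniteProducts C]
    {P : Cᵒᵖ ⥤ BoolAlg.{w}} (fo : FOStructure P) (X Y : C)
    (β : P.obj (op (X ⨯ Y))) : P.obj (op X) :=
  (fo.fa X Y βᶜ)ᶜ

/-- The canonical comparison morphism `M X ⨯ M Y ⟶ M (X ⨯ Y)` of a Boolean doctrine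
morphism, inverse to the product comparison morphism. -/
noncomputable def DoctrineHom.prodPair {C : Type u₁} [Category.{v₁} C] [HasFiniteProducts C]
    {D : Type u₂} [Category.{v₂} D] [HasFiniteProducts D]
    {P : Cᵒᵖ ⥤ BoolAlg.{w}} {R : Dᵒᵖ ⥤ BoolAlg.{w}} (Φ : DoctrineHom P R) (X Y : C) :
    (Φ.functor.obj X ⨯ Φ.functor.obj Y) ⟶ Φ.functor.obj (X ⨯ Y) :=
  letI := Φ.preserves
  (PreservesLimitPair.iso Φ.functor X Y).inv

/-- The image of an element of `P (X ⨯ Y)` in `R (M X ⨯ M Y)`, transported along the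
canonical isomorphism `M (X ⨯ Y) ≅ M X ⨯ M Y`. -/
noncomputable def DoctrineHom.transProd {C : Type u₁} [Category.{v₁} C] [HasFiniteProducts C]
    {D : Type u₂} [Category.{v₂} D] [HasFiniteProducts D]
    {P : Cᵒᵖ ⥤ BoolAlg.{w}} {R : Dᵒᵖ ⥤ BoolAlg.{w}} (Φ : DoctrineHom P R) (X Y : C)
    (α : P.obj (op (X ⨯ Y))) : R.obj (op (Φ.functor.obj X ⨯ Φ.functor.obj Y)) :=
  R.map (Φ.prodPair X Y).op (Φ.trans.app (op (X ⨯ Y)) α)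

/-- A Boolean doctrine morphism between first-order Boolean doctrines is first-order when it
commutes with the universal quantifiers. -/
def DoctrineHom.IsFO {C : Type u₁} [Category.{v₁} C] [HasFiniteProducts C]
    {D : Type u₂} [Category.{v₂} D] [HasFiniteProducts D]
    {P : Cᵒᵖ ⥤ BoolAlg.{w}} {R : Dᵒᵖ ⥤ BoolAlg.{w}} (Φ : DoctrineHom P R)
    (foP : FOStructure P) (foR : FOStructure R) : Prop :=
  ∀ (X Y : C) (β : P.obj (op (X ⨯ Y))),
    (Φ.trans.app (op X) (foP.fa X Y β) : R.obj (op (Φ.functor.obj X))) =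
      foR.fa (Φ.functor.obj X) (Φ.functor.obj Y) (Φ.transProd X Y β)

/-- The Boolean doctrine morphism with identity functor part induced by a natural
transformation between two doctrines over the same base. -/
def idDoctrineHom {C : Type u₁} [Category.{v₁} C] {P Q : Cᵒᵖ ⥤ BoolAlg.{w}} (η : P ⟶ Q) :
    DoctrineHom P Q where
  functor := 𝟭 C
  preserves := inferInstance
  trans := η

/-- A quantifier completion of a Boolean doctrine `P`: a first-order Boolean doctrine `Q`
over the same base category together with a Boolean doctrine morphism `(𝟭 C, ι) : P ⟶ Q`
whose functor part is the identity, such that every Boolean doctrine morphism from `P` to a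
first-order Boolean doctrine factors uniquely through it via a first-order Boolean doctrine
morphism. -/
structure QuantifierCompletion.{w', v', u', v₁', u₁'} {C : Type u₁'} [Category.{v₁'} C]
    [HasFiniteProducts C] (P : Cᵒᵖ ⥤ BoolAlg.{w'}) where
  Q : Cᵒᵖ ⥤ BoolAlg.{w'}
  fo : FOStructure Q
  ι : P ⟶ Q
  univ : ∀ {D : Type u'} [Category.{v'} D] [HasFiniteProducts D]
      (R : Dᵒᵖ ⥤ BoolAlg.{w'}) (foR : FOStructure R) (Φ : DoctrineHom P R),
      ∃! Ψ : DoctrineHom Q R, Ψ.IsFO fo foR ∧ Φ = (idDoctrineHom ι).comp Ψ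

/-- A propositional model of a Boolean doctrine: a Boolean doctrine morphism to the
subsets doctrine. -/
abbrev PropModel {C : Type u} [Category.{v} C] (P : Cᵒᵖ ⥤ BoolAlg.{v}) :=
  DoctrineHom P subsetsDoctrine.{v}

/-- The subset of `M X` interpreting an element `α ∈ P X` in a propositional model. -/
def PropModel.interp {C : Type u} [Category.{v} C] {P : Cᵒᵖ ⥤ BoolAlg.{v}}
    (M : PropModel P) {X : C} (α : P.obj (op X)) : Set (M.functor.obj X) :=
  M.trans.app (op X) α



/-- The object map of a Boolean doctrine morphism. -/
abbrev DoctrineHom.onObj {C : Type u₁} [Category.{v₁} C] {D : Type u₂} [Category.{v₂} D]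
    {P : Cᵒᵖ ⥤ BoolAlg.{w}} {R : Dᵒᵖ ⥤ BoolAlg.{w}} (Φ : DoctrineHom P R) (X : C) : D :=
  Φ.functor.obj X

/-- The component at `X` of the natural transformation of a Boolean doctrine morphism,
applied to an element of the fiber. -/
abbrev DoctrineHom.appAt {C : Type u₁} [Category.{v₁} C] {D : Type u₂} [Category.{v₂} D]
    {P : Cᵒᵖ ⥤ BoolAlg.{w}} {R : Dᵒᵖ ⥤ BoolAlg.{w}} (Φ : DoctrineHom P R) (X : C)
    (a : P.obj (op X)) : R.obj (op (Φ.functor.obj X)) :=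
  Φ.trans.app (op X) a

/-!
By adjunction it suffices to show, over `M S ⨯ ∏ⱼ M Zⱼ`, that the weakening of `⋀ᵢ ∀ αᵢ` lies
below `⋁ⱼ βⱼ(x, zⱼ)`. Each `∀ α_{lᵢ}` instantiates to `α_{lᵢ}(x, gᵢ)`, so this is the
hypothesis transported along `𝔪` and the comparison isomorphism
`M (S ⨯ ∏ Z) ≅ M S ⨯ ∏ M Z`. It remains to pull the quantifier `∀ z⃗` through the disjunction:
`∀ z⃗. ⋁ⱼ βⱼ(x, zⱼ) ≤ ⋁ⱼ ∀ zⱼ. βⱼ(x, zⱼ)` because each disjunct depends on a single variable,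
which follows by induction on `j̄` from `∀ y. (φ ∨ ψ y) ≤ φ ∨ ∀ y. ψ y` and Beck–Chevalley.
-/

lemma sup_univ_fin_succ {A : Type*} [SemilatticeSup A] [OrderBot A] {n : ℕ}
    (f : Fin (n + 1) → A) :
    Finset.univ.sup f = f 0 ⊔ Finset.univ.sup fun k : Fin n => f k.succ := by
  rw [Fin.univ_succ, Finset.sup_cons, Finset.sup_map]
  rfl

lemma map_comp_op_apply {D : Type u₂} [Category.{v₂} D] (R : Dᵒᵖ ⥤ BoolAlg.{w}) {X Y Z : D}
    (f : X ⟶ Y) (g : Y ⟶ Z) (a : R.obj (op Z)) :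
    R.map (f ≫ g).op a = R.map f.op (R.map g.op a) := by
  rw [op_comp, R.map_comp]
  rfl

lemma map_id_op_apply {D : Type u₂} [Category.{v₂} D] (R : Dᵒᵖ ⥤ BoolAlg.{w}) (X : D)
    (a : R.obj (op X)) : R.map (𝟙 X).op a = a := by
  rw [op_id, R.map_id]
  rfl

namespace FOStructure

variable {D : Type u₂} [Category.{v₂} D] [HasFiniteProducts D] {R : Dᵒᵖ ⥤ BoolAlg.{w}}
  (fo : FOStructure R)

lemma map_fa_le_map {W X Y : D} {g : W ⟶ X} {h : W ⟶ X ⨯ Y} (hg : h ≫ prod.fst = g)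
    (β : R.obj (op (X ⨯ Y))) : R.map g.op (fo.fa X Y β) ≤ R.map h.op β := by
  rw [← hg, map_comp_op_apply]
  exact OrderHomClass.mono _ ((fo.adj X Y _ β).1 le_rfl)

lemma fa_mono (X Y : D) : Monotone (fo.fa X Y) := fun _ _ hab =>
  (fo.adj X Y _ _).2 (((fo.adj X Y _ _).1 le_rfl).trans hab)

lemma fa_map_fst_sup_le (X Y : D) (φ : R.obj (op X)) (ψ : R.obj (op (X ⨯ Y))) :
    fo.fa X Y (R.map (prod.fst : X ⨯ Y ⟶ X).op φ ⊔ ψ) ≤ φ ⊔ fo.fa X Y ψ := by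
  rw [← sdiff_le_iff]
  refine (fo.adj X Y _ _).2 ?_
  rw [map_sdiff']
  exact sdiff_le_iff.2 ((fo.adj X Y _ _).1 le_rfl)

lemma fa_le_fa_fa {X A B W : D} (u : (X ⨯ A) ⨯ B ⟶ X ⨯ W)
    (hu : u ≫ prod.fst = prod.fst ≫ prod.fst) (γ : R.obj (op (X ⨯ W))) :
    fo.fa X W γ ≤ fo.fa X A (fo.fa (X ⨯ A) B (R.map u.op γ)) := by
  refine (fo.adj _ _ _ _).2 ((fo.adj _ _ _ _).2 ?_)
  rw [← map_comp_op_apply]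
  exact fo.map_fa_le_map hu γ

lemma fa_bot (X W : D) (s : X ⟶ X ⨯ W) (hs : s ≫ prod.fst = 𝟙 X) :
    fo.fa X W ⊥ = ⊥ := by
  refine le_bot_iff.1 ?_
  simpa only [map_id_op_apply, map_bot] using fo.map_fa_le_map hs ⊥

theorem fa_pi_sup_le {n : ℕ} (X : D) (Z : Fin n → D) (b : ∀ j, R.obj (op (X ⨯ Z j))) :
    fo.fa X (∏ᶜ Z) (Finset.univ.sup fun j => R.map (prod.map (𝟙 X) (Pi.π Z j)).op (b j)) ≤
      Finset.univ.sup fun j => fo.fa X (Z j) (b j) := by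
  induction n generalizing X with
  | zero =>
    simp only [Finset.univ_eq_empty, Finset.sup_empty]
    exact (fo.fa_bot X _ (prod.lift (𝟙 X) (Pi.lift fun j => j.elim0)) (prod.lift_fst _ _)).le
  | succ n ih =>
    set Z' : Fin n → D := fun k => Z k.succ
    -- the isomorphism `(X ⨯ Z₀) ⨯ ∏ Z' ≅ X ⨯ ∏ Z` splitting off the first coordinate
    let u : (X ⨯ Z 0) ⨯ ∏ᶜ Z' ⟶ X ⨯ ∏ᶜ Z := prod.lift (prod.fst ≫ prod.fst)
      (Pi.lift (Fin.cases (prod.fst ≫ prod.snd) fun k => prod.snd ≫ Pi.π Z' k))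
    have hu0 : u ≫ prod.map (𝟙 X) (Pi.π Z 0) = prod.fst := by
      apply prod.hom_ext
      · simp only [u, Category.assoc, prod.map_fst, Category.comp_id, prod.lift_fst]
      · simp only [u, Category.assoc, prod.map_snd, prod.lift_snd_assoc, Pi.lift_π]
        rfl
    have hu_succ : ∀ k, u ≫ prod.map (𝟙 X) (Pi.π Z k.succ) =
        prod.map (𝟙 _) (Pi.π Z' k) ≫ prod.map prod.fst (𝟙 _) := by
      intro k
      apply prod.hom_ext <;> simp [u, Z']
    have hsplit : R.map u.op
        (Finset.univ.sup fun j => R.map (prod.map (𝟙 X) (Pi.π Z j)).op (b j)) =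
        R.map prod.fst.op (b 0) ⊔ Finset.univ.sup fun k => R.map (prod.map (𝟙 _) (Pi.π Z' k)).op
          (R.map (prod.map prod.fst (𝟙 _)).op (b k.succ)) := by
      simp only [sup_univ_fin_succ, map_sup, map_finset_sup, Function.comp_def,
        ← map_comp_op_apply, hu0, hu_succ]
    have hbc : ∀ k, fo.fa (X ⨯ Z 0) (Z' k) (R.map (prod.map prod.fst (𝟙 _)).op (b k.succ)) =
        R.map prod.fst.op (fo.fa X (Z k.succ) (b k.succ)) := fun k =>
      (fo.bc X (X ⨯ Z 0) (Z k.succ) prod.fst (b k.succ)).symm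
    calc fo.fa X (∏ᶜ Z) (Finset.univ.sup fun j => R.map (prod.map (𝟙 X) (Pi.π Z j)).op (b j))
        ≤ fo.fa X (Z 0) (fo.fa (X ⨯ Z 0) (∏ᶜ Z') (R.map u.op
            (Finset.univ.sup fun j => R.map (prod.map (𝟙 X) (Pi.π Z j)).op (b j)))) :=
          fo.fa_le_fa_fa u (prod.lift_fst _ _) _
      _ ≤ fo.fa X (Z 0) (R.map prod.fst.op
            (Finset.univ.sup fun k : Fin n => fo.fa X (Z k.succ) (b k.succ)) ⊔ b 0) := by
          refine fo.fa_mono _ _ ?_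
          rw [hsplit, sup_comm _ (b 0)]
          refine (fo.fa_map_fst_sup_le _ _ _ _).trans
            (sup_le_sup_left ((ih (X ⨯ Z 0) Z' _).trans_eq ?_) _)
          simp only [hbc, map_finset_sup, Function.comp_def]
      _ ≤ (Finset.univ.sup fun k : Fin n => fo.fa X (Z k.succ) (b k.succ)) ⊔ fo.fa X (Z 0) (b 0) :=
          fo.fa_map_fst_sup_le _ _ _ _
      _ = Finset.univ.sup fun j => fo.fa X (Z j) (b j) := by
          rw [sup_univ_fin_succ, sup_comm]

end FOStructure

namespace DoctrineHom

variable {C : Type u₁} [Category.{v₁} C] {D : Type u₂} [Category.{v₂} D]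
  {P : Cᵒᵖ ⥤ BoolAlg.{w}} {R : Dᵒᵖ ⥤ BoolAlg.{w}} (Φ : DoctrineHom P R)

lemma trans_app_map_apply {A B : C} (f : A ⟶ B) (x : P.obj (op B)) :
    Φ.trans.app (op A) (P.map f.op x) = R.map (Φ.functor.map f).op (Φ.trans.app (op B) x) :=
  congrArg (fun φ => φ x) (Φ.trans.naturality f.op)

variable [HasFiniteProducts C] [HasFiniteProducts D]

lemma prodComparison_prodPair (X Y : C) :
    prodComparison Φ.functor X Y ≫ Φ.prodPair X Y = 𝟙 _ := by
  have := Φ.preserves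
  rw [prodPair, ← PreservesLimitPair.iso_hom, Iso.hom_inv_id]

lemma trans_app_map_eq_map_transProd {A X Y : C} (e : A ⟶ X ⨯ Y) (x : P.obj (op (X ⨯ Y))) :
    Φ.trans.app (op A) (P.map e.op x) =
      R.map (Φ.functor.map e ≫ prodComparison Φ.functor X Y).op (Φ.transProd X Y x) := by
  rw [transProd, ← map_comp_op_apply, Category.assoc, prodComparison_prodPair, Category.comp_id,
    trans_app_map_apply]

lemma exists_prod_pi_lift {J : Type*} [Finite J] (S : C) (Z : J → C) :
    ∃ w : Φ.functor.obj S ⨯ ∏ᶜ (fun j => Φ.functor.obj (Z j)) ⟶ Φ.functor.obj (S ⨯ ∏ᶜ Z),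
      w ≫ Φ.functor.map prod.fst = prod.fst ∧
        ∀ j, w ≫ Φ.functor.map (prod.snd ≫ Pi.π Z j) = prod.snd ≫ Pi.π _ j := by
  have := Φ.preserves
  refine ⟨prod.map (𝟙 _) (inv (piComparison Φ.functor Z)) ≫
    inv (prodComparison Φ.functor S _), by simp [inv_prodComparison_map_fst], fun j => ?_⟩
  simp [inv_prodComparison_map_snd_assoc]

theorem map_fst_inf_fa_le_sup (foR : FOStructure R) {ι κ ν : Type*} [Fintype ι] [Fintype κ]
    [Fintype ν] (S : C) (Y : ι → C) (Z : κ → C) (α : ∀ i, P.obj (op (S ⨯ Y i)))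
    (β : ∀ j, P.obj (op (S ⨯ Z j))) (l : ν → ι) (g : ∀ i, (S ⨯ ∏ᶜ Z) ⟶ Y (l i))
    (hle : (Finset.univ.inf fun i =>
        P.map (prod.lift (prod.fst : S ⨯ ∏ᶜ Z ⟶ S) (g i)).op (α (l i))) ≤
      Finset.univ.sup fun j =>
        P.map (prod.lift (prod.fst : S ⨯ ∏ᶜ Z ⟶ S)
          ((prod.snd : S ⨯ ∏ᶜ Z ⟶ ∏ᶜ Z) ≫ Pi.π Z j)).op (β j)) :
    R.map (prod.fst : Φ.functor.obj S ⨯ ∏ᶜ (fun j => Φ.functor.obj (Z j)) ⟶ _).op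
        (Finset.univ.inf fun i =>
          foR.fa (Φ.functor.obj S) (Φ.functor.obj (Y i)) (Φ.transProd S (Y i) (α i))) ≤
      Finset.univ.sup fun j =>
        R.map (prod.map (𝟙 _) (Pi.π _ j)).op (Φ.transProd S (Z j) (β j)) := by
  obtain ⟨w, hw_fst, hw_snd⟩ := Φ.exists_prod_pi_lift S Z
  have hg : ∀ i, (w ≫ Φ.functor.map (prod.lift prod.fst (g i)) ≫
      prodComparison Φ.functor S (Y (l i))) ≫ prod.fst = prod.fst := by
    intro i
    rw [Category.assoc, Category.assoc, prodComparison_fst, ← Functor.map_comp, prod.lift_fst,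
      hw_fst]
  have hπ : ∀ j, w ≫ Φ.functor.map (prod.lift prod.fst (prod.snd ≫ Pi.π Z j)) ≫
      prodComparison Φ.functor S (Z j) = prod.map (𝟙 _) (Pi.π _ j) := by
    intro j
    apply prod.hom_ext
    · rw [Category.assoc, Category.assoc, prodComparison_fst, ← Functor.map_comp, prod.lift_fst,
        hw_fst, prod.map_fst, Category.comp_id]
    · rw [Category.assoc, Category.assoc, prodComparison_snd, ← Functor.map_comp, prod.lift_snd,
        hw_snd, prod.map_snd]
  calc R.map prod.fst.op (Finset.univ.inf fun i =>
          foR.fa (Φ.functor.obj S) (Φ.functor.obj (Y i)) (Φ.transProd S (Y i) (α i)))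
      ≤ Finset.univ.inf fun i => R.map (w ≫ Φ.functor.map (prod.lift prod.fst (g i)) ≫
          prodComparison Φ.functor S (Y (l i))).op (Φ.transProd S (Y (l i)) (α (l i))) :=
        Finset.le_inf fun i _ =>
          (OrderHomClass.mono _ (Finset.inf_le (Finset.mem_univ (l i)))).trans
            (foR.map_fa_le_map (hg i) _)
    _ = R.map w.op (Φ.trans.app _ (Finset.univ.inf fun i =>
          P.map (prod.lift (prod.fst : S ⨯ ∏ᶜ Z ⟶ S) (g i)).op (α (l i)))) := by
        simp only [map_finset_inf, Function.comp_def, trans_app_map_eq_map_transProd,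
          ← map_comp_op_apply]
    _ ≤ R.map w.op (Φ.trans.app _ (Finset.univ.sup fun j =>
          P.map (prod.lift (prod.fst : S ⨯ ∏ᶜ Z ⟶ S)
            ((prod.snd : S ⨯ ∏ᶜ Z ⟶ ∏ᶜ Z) ≫ Pi.π Z j)).op (β j))) :=
        OrderHomClass.mono _ (OrderHomClass.mono _ hle)
    _ = _ := by
        simp only [map_finset_sup, Function.comp_def, trans_app_map_eq_map_transProd,
          ← map_comp_op_apply, hπ]

end DoctrineHom

theorem stmt18 {C : Type u₁} [Category.{v₁} C] [HasFiniteProducts C]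
    {D : Type u₂} [Category.{v₂} D] [HasFiniteProducts D]
    (P : Cᵒᵖ ⥤ BoolAlg.{w}) (R : Dᵒᵖ ⥤ BoolAlg.{w}) (foR : FOStructure R)
    (Φ : DoctrineHom P R) {ibar jbar : ℕ} (S : C) (Y : Fin ibar → C) (Z : Fin jbar → C)
    (α : ∀ i, P.obj (op (S ⨯ Y i))) (β : ∀ j, P.obj (op (S ⨯ Z j)))
    (h : ∃ (n : ℕ) (l : Fin n → Fin ibar) (g : ∀ i : Fin n, (S ⨯ ∏ᶜ Z) ⟶ Y (l i)),
        (Finset.univ.inf fun i =>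
            P.map (prod.lift (prod.fst : S ⨯ ∏ᶜ Z ⟶ S) (g i)).op (α (l i))) ≤
          Finset.univ.sup fun j =>
            P.map (prod.lift (prod.fst : S ⨯ ∏ᶜ Z ⟶ S)
              ((prod.snd : S ⨯ ∏ᶜ Z ⟶ ∏ᶜ Z) ≫ Pi.π Z j)).op (β j)) :
    (Finset.univ.inf fun i =>
        foR.fa (Φ.functor.obj S) (Φ.functor.obj (Y i)) (Φ.transProd S (Y i) (α i))) ≤
      Finset.univ.sup fun j =>
        foR.fa (Φ.functor.obj S) (Φ.functor.obj (Z j)) (Φ.transProd S (Z j) (β j)) := by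
  obtain ⟨n, l, g, hle⟩ := h
  exact ((foR.adj _ _ _ _).2 (Φ.map_fst_inf_fa_le_sup foR S Y Z α β l g hle)).trans
    (foR.fa_pi_sup_le _ _ _)

end BooleanDoctrine
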